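/- arXiv:1810.09157 — 2 statements merged into one kernel-verified Lean document; each statement's English description precedes it below -/
import Mathlib

section
/- The total contact force F(a) = (G/(1−ν))·((a² + R²)·log((R+a)/(R−a)) − 2aR) for a spherical indenter is strictly positive and strictly increasing in the contact radius a on (0, R), provided G > 0 and 0 < ν < 1. -/
/-!
Write the force as `G / (1 - ν) * f a` with `f a = (a² + R²) log((R + a)/(R - a)) - 2aR`.
Then `f 0 = 0`, and since `d/da log((R + a)/(R - a)) = 2R / (R² - a²)`,
`f' a = 2a log((R + a)/(R - a)) + 4Ra² / (R² - a²)`, which is positive on `(0, R)`.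
So `f` is strictly increasing on `[0, R)`, hence positive on `(0, R)`, and the positive
factor `G / (1 - ν)` preserves both properties.
-/

open Real Set

noncomputable section

namespace SphericalIndentation

def forceProfile (R a : ℝ) : ℝ :=
  (a ^ 2 + R ^ 2) * log ((R + a) / (R - a)) - 2 * a * R

variable {R a : ℝ}

theorem hasDerivAt_log_add_div_sub (ha : a ∈ Ioo (-R) R) :
    HasDerivAt (fun x => log ((R + x) / (R - x))) (2 * R / (R ^ 2 - a ^ 2)) a := by
  obtain ⟨hlo, hhi⟩ := ha
  have hsub : R - a ≠ 0 := by linarith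
  have hquot : HasDerivAt (fun x => (R + x) / (R - x))
      ((1 * (R - a) - (R + a) * (-1)) / (R - a) ^ 2) a :=
    ((hasDerivAt_id a).const_add R).div ((hasDerivAt_id a).neg.const_add R) hsub
  convert hquot.log (div_pos (by linarith) (by linarith)).ne' using 1
  have hadd : R + a ≠ 0 := by linarith
  have hsq : R ^ 2 - a ^ 2 ≠ 0 := by nlinarith
  field_simp
  ring

theorem hasDerivAt_forceProfile (ha : a ∈ Ioo (-R) R) :
    HasDerivAt (forceProfile R)
      (2 * a * log ((R + a) / (R - a)) + 4 * R * a ^ 2 / (R ^ 2 - a ^ 2)) a := by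
  have hsq : R ^ 2 - a ^ 2 ≠ 0 := by
    obtain ⟨hlo, hhi⟩ := ha
    nlinarith
  have hpoly : HasDerivAt (fun x : ℝ => x ^ 2 + R ^ 2) (2 * a) a := by
    simpa using (hasDerivAt_pow 2 a).add_const (R ^ 2)
  have hlin : HasDerivAt (fun x : ℝ => 2 * x * R) (2 * R) a := by
    simpa using ((hasDerivAt_id a).const_mul 2).mul_const R
  refine ((hpoly.mul (hasDerivAt_log_add_div_sub ha)).sub hlin).congr_deriv ?_
  field_simp
  ring

theorem deriv_forceProfile_pos (ha : a ∈ Ioo 0 R) :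
    0 < 2 * a * log ((R + a) / (R - a)) + 4 * R * a ^ 2 / (R ^ 2 - a ^ 2) := by
  obtain ⟨ha0, haR⟩ := ha
  have hR : 0 < R := ha0.trans haR
  have hlog : 0 < log ((R + a) / (R - a)) :=
    log_pos ((one_lt_div (by linarith)).mpr (by linarith))
  have hfrac : 0 < 4 * R * a ^ 2 / (R ^ 2 - a ^ 2) :=
    div_pos (by positivity) (by nlinarith)
  exact add_pos (mul_pos (by positivity) hlog) hfrac

theorem forceProfile_zero (R : ℝ) : forceProfile R 0 = 0 := by
  simp [forceProfile]

theorem strictMonoOn_forceProfile : StrictMonoOn (forceProfile R) (Ico 0 R) := by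
  have hmem : ∀ x ∈ Ico 0 R, x ∈ Ioo (-R) R := fun x ⟨hx0, hxR⟩ => ⟨by linarith, hxR⟩
  refine strictMonoOn_of_deriv_pos (convex_Ico 0 R)
    (fun x hx => (hasDerivAt_forceProfile (hmem x hx)).continuousAt.continuousWithinAt) ?_
  intro x hx
  rw [interior_Ico] at hx
  rw [(hasDerivAt_forceProfile (hmem x (Ioo_subset_Ico_self hx))).deriv]
  exact deriv_forceProfile_pos hx

theorem forceProfile_pos (ha : a ∈ Ioo 0 R) : 0 < forceProfile R a := by
  have h := strictMonoOn_forceProfile ⟨le_rfl, ha.1.trans ha.2⟩ (Ioo_subset_Ico_self ha) ha.1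
  rwa [forceProfile_zero] at h

end SphericalIndentation

end

open SphericalIndentation in
theorem stmt_3_general (R G ν : ℝ) (hG : 0 < G) (hν : ν ∈ Set.Ioo (0 : ℝ) 1) :
    (∀ a ∈ Set.Ioo (0 : ℝ) R,
      0 < G / (1 - ν) * ((a ^ 2 + R ^ 2) * Real.log ((R + a) / (R - a)) - 2 * a * R)) ∧
    StrictMonoOn
      (fun a => G / (1 - ν) * ((a ^ 2 + R ^ 2) * Real.log ((R + a) / (R - a)) - 2 * a * R))
      (Set.Ioo (0 : ℝ) R) := by
  have hfactor : 0 < G / (1 - ν) := div_pos hG (by linarith [hν.2])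
  refine ⟨fun a ha => mul_pos hfactor (forceProfile_pos ha), ?_⟩
  intro a ha b hb hab
  exact mul_lt_mul_of_pos_left
    (strictMonoOn_forceProfile (Ioo_subset_Ico_self ha) (Ioo_subset_Ico_self hb) hab) hfactor

theorem stmt_3 (R G ν : ℝ) (hR : 0 < R) (hG : 0 < G) (hν : ν ∈ Set.Ioo (0 : ℝ) 1) :
    (∀ a ∈ Set.Ioo (0 : ℝ) R,
      0 < G / (1 - ν) * ((a ^ 2 + R ^ 2) * Real.log ((R + a) / (R - a)) - 2 * a * R)) ∧
    StrictMonoOn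
      (fun a => G / (1 - ν) * ((a ^ 2 + R ^ 2) * Real.log ((R + a) / (R - a)) - 2 * a * R))
      (Set.Ioo (0 : ℝ) R) :=
  stmt_3_general R G ν hG hν
end

section
/- The function F(a) = (G/(1−ν))·((a² + R²)·log((R+a)/(R−a)) − 2aR) satisfies F(a) → 0 as a → 0⁺ and F(a) → +∞ as a → R⁻; hence by continuity and strict monotonicity, for every target force F* > 0 there exists a unique contact radius a ∈ (0,R) with F(a) = F*. -/
open Filter Topology Set

/-! With `C = G / (1 - ν) > 0` we have `F = C · contactForceProfile R`. The profile vanishes at `0`,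
has derivative `2a log((R+a)/(R-a)) + 4Ra²/(R² - a²) > 0` on `(0, R)`, and tends to `+∞` at `R⁻`
since the logarithm does while its coefficient tends to `2R²`. The intermediate value theorem
between a point near `0` (where `F < F*`) and one near `R` (where `F ≥ F*`) gives the contact
radius; strict monotonicity makes it unique. -/

theorem existsUnique_mem_Ioo_eq_of_tendsto {α δ : Type*} [ConditionallyCompleteLinearOrder α]
    [TopologicalSpace α] [OrderTopology α] [DenselyOrdered α] [LinearOrder δ]
    [TopologicalSpace δ] [OrderClosedTopology δ] {f : α → δ} {a b : α} {l y : δ} (hab : a < b)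
    (hcont : ContinuousOn f (Ioo a b)) (hinj : InjOn f (Ioo a b))
    (hlow : Tendsto f (𝓝[>] a) (𝓝 l)) (hhigh : Tendsto f (𝓝[<] b) atTop) (hy : l < y) :
    ∃! x, x ∈ Ioo a b ∧ f x = y := by
  have := nhdsGT_neBot_of_exists_gt ⟨b, hab⟩
  have := nhdsLT_neBot_of_exists_lt ⟨a, hab⟩
  obtain ⟨x₀, hx₀y, hx₀⟩ :=
    ((hlow.eventually_lt_const hy).and (Ioo_mem_nhdsGT hab)).exists
  obtain ⟨x₁, hx₁y, hx₁⟩ :=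
    ((hhigh.eventually_ge_atTop y).and (Ioo_mem_nhdsLT hab)).exists
  obtain ⟨x, hx, hxy⟩ := hcont.surjOn_Icc hx₀ hx₁ ⟨hx₀y.le, hx₁y⟩
  exact ⟨x, ⟨hx, hxy⟩, fun x' hx' => hinj hx'.1 hx (hx'.2.trans hxy.symm)⟩

noncomputable def contactForceProfile (R a : ℝ) : ℝ :=
  (a ^ 2 + R ^ 2) * Real.log ((R + a) / (R - a)) - 2 * a * R

section

variable {R : ℝ}

theorem continuousOn_contactForceProfile : ContinuousOn (contactForceProfile R) (Ioo (-R) R) := by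
  intro a ha
  have hRa : R - a ≠ 0 := by linarith [ha.2]
  have hRa' : R + a ≠ 0 := by linarith [ha.1]
  refine ContinuousAt.continuousWithinAt ?_
  unfold contactForceProfile
  exact ((continuousAt_id.pow 2).add continuousAt_const).mul
    ((continuousAt_const.add continuousAt_id).div (continuousAt_const.sub continuousAt_id)
      hRa |>.log (div_ne_zero hRa' hRa)) |>.sub (by fun_prop)

theorem hasDerivAt_contactForceProfile {a : ℝ} (ha : a ∈ Ioo (-R) R) :
    HasDerivAt (contactForceProfile R)
      (2 * a * Real.log ((R + a) / (R - a)) + 4 * R * a ^ 2 / (R ^ 2 - a ^ 2)) a := by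
  have hRa : R - a ≠ 0 := by linarith [ha.2]
  have hRa' : R + a ≠ 0 := by linarith [ha.1]
  have hquot : HasDerivAt (fun x => (R + x) / (R - x)) (2 * R / (R - a) ^ 2) a :=
    (((hasDerivAt_id' a).const_add R).div ((hasDerivAt_id' a).const_sub R) hRa).congr_deriv
      (by ring)
  have hsq : HasDerivAt (fun x => x ^ 2 + R ^ 2) (2 * a) a := by
    simpa using (hasDerivAt_pow 2 a).add_const (R ^ 2)
  refine ((hsq.mul (hquot.log (div_ne_zero hRa' hRa))).sub
    (((hasDerivAt_id' a).const_mul 2).mul_const R)).congr_deriv ?_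
  have : R ^ 2 - a ^ 2 ≠ 0 := by
    rw [sq_sub_sq]; exact mul_ne_zero hRa' hRa
  field_simp
  ring

theorem strictMonoOn_contactForceProfile : StrictMonoOn (contactForceProfile R) (Ioo 0 R) := by
  have hsub : Ioo 0 R ⊆ Ioo (-R) R := fun a ha => ⟨by linarith [ha.1, ha.2], ha.2⟩
  refine strictMonoOn_of_hasDerivWithinAt_pos (convex_Ioo 0 R)
    (continuousOn_contactForceProfile.mono hsub)
    (fun a ha => (hasDerivAt_contactForceProfile (hsub (interior_subset ha))).hasDerivWithinAt) ?_
  simp only [interior_Ioo]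
  rintro a ⟨ha0, haR⟩
  have hlog : 0 < Real.log ((R + a) / (R - a)) :=
    Real.log_pos ((one_lt_div (by linarith)).mpr (by linarith))
  have hsq : 0 < R ^ 2 - a ^ 2 := by nlinarith
  have hR : 0 < R := ha0.trans haR
  positivity

theorem contactForceProfile_zero : contactForceProfile R 0 = 0 := by
  simp [contactForceProfile]

theorem tendsto_contactForceProfile_nhdsGT_zero (hR : 0 < R) :
    Tendsto (contactForceProfile R) (𝓝[>] 0) (𝓝 0) := by
  have hcont := continuousOn_contactForceProfile.continuousAt
    (Ioo_mem_nhds (neg_neg_of_pos hR) hR)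
  simpa only [contactForceProfile_zero] using hcont.tendsto.mono_left nhdsWithin_le_nhds

theorem tendsto_contactForceProfile_nhdsLT_atTop (hR : 0 < R) :
    Tendsto (contactForceProfile R) (𝓝[<] R) atTop := by
  have hgap : Tendsto (fun a => R - a) (𝓝[<] R) (𝓝[>] 0) := by
    refine tendsto_nhdsWithin_of_tendsto_nhds_of_eventually_within _ ?_ ?_
    · simpa using ((continuous_sub_left R).tendsto R).mono_left nhdsWithin_le_nhds
    · filter_upwards [self_mem_nhdsWithin] with a (ha : a < R)
      exact sub_pos.mpr ha
  have hquot : Tendsto (fun a => (R + a) / (R - a)) (𝓝[<] R) atTop := by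
    simp_rw [div_eq_mul_inv]
    refine Tendsto.pos_mul_atTop (by positivity : 0 < R + R) ?_
      (tendsto_inv_nhdsGT_zero.comp hgap)
    exact ((continuous_const_add R).tendsto R).mono_left nhdsWithin_le_nhds
  have hsq : Tendsto (fun a => a ^ 2 + R ^ 2) (𝓝[<] R) (𝓝 (R ^ 2 + R ^ 2)) :=
    ((by fun_prop : Continuous fun a : ℝ => a ^ 2 + R ^ 2).tendsto R).mono_left
      nhdsWithin_le_nhds
  have hlin : Tendsto (fun a => 2 * a * R) (𝓝[<] R) (𝓝 (2 * R * R)) :=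
    ((by fun_prop : Continuous fun a : ℝ => 2 * a * R).tendsto R).mono_left nhdsWithin_le_nhds
  exact (hsq.pos_mul_atTop (by positivity) (Real.tendsto_log_atTop.comp hquot)).atTop_add
    hlin.neg |>.congr fun a => (sub_eq_add_neg _ _).symm

end

theorem stmt_4 (R G ν : ℝ) (hR : 0 < R) (hG : 0 < G) (hν : ν ∈ Set.Ioo (0 : ℝ) 1)
    (F : ℝ → ℝ)
    (hF : ∀ a, F a = G / (1 - ν) * ((a ^ 2 + R ^ 2) * Real.log ((R + a) / (R - a)) - 2 * a * R)) :
    Tendsto F (𝓝[>] 0) (𝓝 0) ∧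
    Tendsto F (𝓝[<] R) atTop ∧
    ∀ Fstar : ℝ, 0 < Fstar → ∃! a : ℝ, a ∈ Set.Ioo (0 : ℝ) R ∧ F a = Fstar := by
  have hC : 0 < G / (1 - ν) := div_pos hG (sub_pos.mpr hν.2)
  have hFC : F = fun a => G / (1 - ν) * contactForceProfile R a := funext hF
  have hlow : Tendsto F (𝓝[>] 0) (𝓝 0) := by
    simpa [hFC] using (tendsto_contactForceProfile_nhdsGT_zero hR).const_mul (G / (1 - ν))
  have hhigh : Tendsto F (𝓝[<] R) atTop :=
    hFC ▸ (tendsto_contactForceProfile_nhdsLT_atTop hR).const_mul_atTop hC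
  have hcont : ContinuousOn F (Ioo 0 R) :=
    hFC ▸ continuousOn_const.mul
      (continuousOn_contactForceProfile.mono fun a ha => ⟨by linarith [ha.1], ha.2⟩)
  have hinj : InjOn F (Ioo 0 R) :=
    hFC ▸ (mul_right_injective₀ hC.ne').comp_injOn strictMonoOn_contactForceProfile.injOn
  exact ⟨hlow, hhigh, fun Fstar hFstar =>
    existsUnique_mem_Ioo_eq_of_tendsto hR hcont hinj hlow hhigh hFstar⟩
end
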